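/- (Second-order accuracy of the three-arc decomposition.) Let (x₀, ψ₀) ∈ ℝ² × ℝ, let p₁, p₂, p₃ ∈ ℝ² × ℝ be constant body-frame velocities and λ₁, λ₂, λ₃ ≥ 0. For t ≥ 0 let E(t) ∈ ℝ² × ℝ be the final state obtained by starting at (x₀, ψ₀) and successively following the induced state trajectories of p₁ for duration λ₁ t, then p₂ for duration λ₂ t, then p₃ for duration λ₃ t; and let A(t) be the final state of the induced state trajectory of the single velocity p̄ = λ₁ p₁ + λ₂ p₂ + λ₃ p₃ followed for duration t from (x₀, ψ₀). Then there exists a constant C ≥ 0 such that ‖E(t) − A(t)‖ ≤ C t² for all t ∈ [0, 1]. -/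

import Mathlib

/-!
Along an arc the heading is affine in time, and `θ ↦ Rot θ *ᵥ v` is `2‖v‖`-Lipschitz, so an arc
of duration `a` started at heading `θ` stays within `O((|θ - ψ₀| + a) a)` of the straight segment
`a • (Rot ψ₀ *ᵥ v)`. Since every heading met before time `t` is within `O(t)` of `ψ₀`, both the
three arcs and the averaged arc agree up to `O(t²)` with straight motion at the frozen heading
`ψ₀`, and for that motion the displacements of consecutive arcs simply add.
-/

open Real Matrix

/-- The planar rotation matrix `Rot θ = [[cos θ, −sin θ],[sin θ, cos θ]]`. -/
noncomputable def Rot (θ : ℝ) : Matrix (Fin 2) (Fin 2) ℝ :=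
  !![Real.cos θ, -Real.sin θ; Real.sin θ, Real.cos θ]

/-- The state reached at time `τ` by following, from the planar state `s = (x, ψ)`, the
induced state trajectory of the constant body-frame velocity `p = (v, ω)`:
`(x + ∫₀^τ Rot (ψ + ω σ) v dσ, ψ + ω τ)`. -/
noncomputable def trajFrom (s : (Fin 2 → ℝ) × ℝ) (p : (Fin 2 → ℝ) × ℝ) (τ : ℝ) :
    (Fin 2 → ℝ) × ℝ :=
  (s.1 + ∫ σ in (0:ℝ)..τ, Rot (s.2 + p.2 * σ) *ᵥ p.1, s.2 + p.2 * τ)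

/-- The Euclidean norm on `ℝ² × ℝ ≅ ℝ³`. -/
noncomputable def normState (a : (Fin 2 → ℝ) × ℝ) : ℝ :=
  Real.sqrt (a.1 0 ^ 2 + a.1 1 ^ 2 + a.2 ^ 2)

open MeasureTheory

theorem Rot_mulVec_apply_zero (θ : ℝ) (v : Fin 2 → ℝ) :
    (Rot θ *ᵥ v) 0 = Real.cos θ * v 0 - Real.sin θ * v 1 := by
  simp [Rot, mulVec, dotProduct, Fin.sum_univ_two, sub_eq_add_neg]

theorem Rot_mulVec_apply_one (θ : ℝ) (v : Fin 2 → ℝ) :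
    (Rot θ *ᵥ v) 1 = Real.sin θ * v 0 + Real.cos θ * v 1 := by
  simp [Rot, mulVec, dotProduct, Fin.sum_univ_two]

theorem norm_Rot_mulVec_sub_Rot_mulVec_le (θ θ' : ℝ) (v : Fin 2 → ℝ) :
    ‖Rot θ *ᵥ v - Rot θ' *ᵥ v‖ ≤ 2 * ‖v‖ * |θ - θ'| := by
  have hv : ∀ j, |v j| ≤ ‖v‖ := fun j => norm_le_pi_norm v j
  have hcos := abs_cos_sub_cos_le θ θ'
  have hsin := abs_sin_sub_sin_le θ θ'
  refine (pi_norm_le_iff_of_nonneg (by positivity)).2 fun j => ?_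
  rw [Real.norm_eq_abs]
  fin_cases j
  · calc |(Rot θ *ᵥ v - Rot θ' *ᵥ v) 0|
        = |(Real.cos θ - Real.cos θ') * v 0 - (Real.sin θ - Real.sin θ') * v 1| := by
          simp only [Pi.sub_apply, Rot_mulVec_apply_zero]; ring_nf
      _ ≤ |Real.cos θ - Real.cos θ'| * |v 0| + |Real.sin θ - Real.sin θ'| * |v 1| := by
          rw [← abs_mul, ← abs_mul]; exact abs_sub _ _
      _ ≤ |θ - θ'| * ‖v‖ + |θ - θ'| * ‖v‖ := by gcongr <;> apply hv
      _ = 2 * ‖v‖ * |θ - θ'| := by ring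
  · calc |(Rot θ *ᵥ v - Rot θ' *ᵥ v) 1|
        = |(Real.sin θ - Real.sin θ') * v 0 + (Real.cos θ - Real.cos θ') * v 1| := by
          simp only [Pi.sub_apply, Rot_mulVec_apply_one]; ring_nf
      _ ≤ |Real.sin θ - Real.sin θ'| * |v 0| + |Real.cos θ - Real.cos θ'| * |v 1| := by
          rw [← abs_mul, ← abs_mul]; exact abs_add_le _ _
      _ ≤ |θ - θ'| * ‖v‖ + |θ - θ'| * ‖v‖ := by gcongr <;> apply hv
      _ = 2 * ‖v‖ * |θ - θ'| := by ring

theorem continuous_Rot_mulVec (v : Fin 2 → ℝ) : Continuous fun θ => Rot θ *ᵥ v :=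
  (LipschitzWith.of_dist_le_mul (K := 2 * ‖v‖₊) fun θ θ' => by
    simpa [dist_eq_norm, Real.dist_eq] using norm_Rot_mulVec_sub_Rot_mulVec_le θ θ' v).continuous

theorem intervalIntegral.norm_integral_sub_smul_le {E : Type*} [NormedAddCommGroup E]
    [NormedSpace ℝ E] [CompleteSpace E] {f : ℝ → E} {c : E} {a b M : ℝ}
    (hf : IntervalIntegrable f volume a b) (h : ∀ σ ∈ Set.uIoc a b, ‖f σ - c‖ ≤ M) :
    ‖(∫ σ in a..b, f σ) - (b - a) • c‖ ≤ M * |b - a| := by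
  rw [← intervalIntegral.integral_const,
    ← intervalIntegral.integral_sub hf intervalIntegrable_const]
  exact intervalIntegral.norm_integral_le_of_norm_le_const h

theorem norm_trajFrom_fst_sub_le (s p : (Fin 2 → ℝ) × ℝ) (ψ a : ℝ) :
    ‖(trajFrom s p a).1 - (s.1 + a • (Rot ψ *ᵥ p.1))‖
      ≤ 2 * ‖p.1‖ * (|s.2 - ψ| + |p.2| * |a|) * |a| := by
  have hcont : Continuous fun σ => Rot (s.2 + p.2 * σ) *ᵥ p.1 :=
    (continuous_Rot_mulVec p.1).comp (by fun_prop)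
  simpa [trajFrom] using intervalIntegral.norm_integral_sub_smul_le (hcont.intervalIntegrable 0 a)
    fun σ hσ => (norm_Rot_mulVec_sub_Rot_mulVec_le _ ψ p.1).trans <| by
      have hσa : |σ| ≤ |a| := by
        simpa using Set.abs_sub_left_of_mem_uIcc (Set.uIoc_subset_uIcc hσ)
      have : |s.2 + p.2 * σ - ψ| ≤ |s.2 - ψ| + |p.2| * |a| := by
        calc |s.2 + p.2 * σ - ψ| = |(s.2 - ψ) + p.2 * σ| := by ring_nf
          _ ≤ |s.2 - ψ| + |p.2| * |σ| := by rw [← abs_mul]; exact abs_add_le _ _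
          _ ≤ |s.2 - ψ| + |p.2| * |a| := by gcongr
      gcongr

theorem normState_le_two_mul_norm_fst {a : (Fin 2 → ℝ) × ℝ} (ha : a.2 = 0) :
    normState a ≤ 2 * ‖a.1‖ := by
  have h0 := norm_le_pi_norm a.1 0
  have h1 := norm_le_pi_norm a.1 1
  rw [Real.norm_eq_abs] at h0 h1
  rw [normState, ha, Real.sqrt_le_left (by positivity)]
  nlinarith [sq_abs (a.1 0), sq_abs (a.1 1), abs_nonneg (a.1 0), abs_nonneg (a.1 1)]

/-- Freezing the heading at `s₀.2` makes the first-order displacement linear in `p`, so the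
approximations of consecutive arcs add up. -/
def FollowsToSecondOrder (γ : ℝ → (Fin 2 → ℝ) × ℝ) (s₀ p : (Fin 2 → ℝ) × ℝ) : Prop :=
  (∀ t, (γ t).2 = s₀.2 + p.2 * t) ∧
    ∃ C, ∀ t, ‖(γ t).1 - (s₀.1 + t • (Rot s₀.2 *ᵥ p.1))‖ ≤ C * t ^ 2

namespace FollowsToSecondOrder

variable {γ γ' : ℝ → (Fin 2 → ℝ) × ℝ} {s₀ p : (Fin 2 → ℝ) × ℝ}

theorem const (s₀ : (Fin 2 → ℝ) × ℝ) : FollowsToSecondOrder (fun _ => s₀) s₀ 0 :=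
  ⟨fun t => by simp, 0, fun t => by simp⟩

theorem trajFrom (h : FollowsToSecondOrder γ s₀ p) (q : (Fin 2 → ℝ) × ℝ) (l : ℝ) :
    FollowsToSecondOrder (fun t => _root_.trajFrom (γ t) q (l * t)) s₀ (p + l • q) := by
  obtain ⟨hψ, C, hC⟩ := h
  refine ⟨fun t => by
      simp only [_root_.trajFrom, hψ, Prod.snd_add, Prod.smul_snd, smul_eq_mul]; ring,
    C + 2 * ‖q.1‖ * (|p.2| + |q.2| * |l|) * |l|, fun t => ?_⟩
  have harc := norm_trajFrom_fst_sub_le (γ t) q s₀.2 (l * t)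
  rw [hψ t, add_sub_cancel_left, abs_mul, abs_mul] at harc
  calc ‖(_root_.trajFrom (γ t) q (l * t)).1 - (s₀.1 + t • (Rot s₀.2 *ᵥ (p + l • q).1))‖
      = ‖((γ t).1 - (s₀.1 + t • (Rot s₀.2 *ᵥ p.1)))
          + ((_root_.trajFrom (γ t) q (l * t)).1 - ((γ t).1 + (l * t) • (Rot s₀.2 *ᵥ q.1)))‖ := by
        congr 1
        simp only [Prod.fst_add, Prod.smul_fst, mulVec_add, mulVec_smul]
        module
    _ ≤ C * t ^ 2 + 2 * ‖q.1‖ * (|p.2| * |t| + |q.2| * (|l| * |t|)) * (|l| * |t|) :=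
        norm_add_le_of_le (hC t) harc
    _ = (C + 2 * ‖q.1‖ * (|p.2| + |q.2| * |l|) * |l|) * t ^ 2 := by
        rw [← sq_abs t]; ring

theorem exists_normState_sub_le (h : FollowsToSecondOrder γ s₀ p)
    (h' : FollowsToSecondOrder γ' s₀ p) :
    ∃ C, 0 ≤ C ∧ ∀ t, normState (γ t - γ' t) ≤ C * t ^ 2 := by
  obtain ⟨hψ, C, hC⟩ := h
  obtain ⟨hψ', C', hC'⟩ := h'
  have hfst : ∀ t, ‖(γ t - γ' t).1‖ ≤ (C + C') * t ^ 2 := fun t => by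
    rw [Prod.fst_sub, ← sub_sub_sub_cancel_right _ _ (s₀.1 + t • (Rot s₀.2 *ᵥ p.1)), add_mul]
    exact norm_sub_le_of_le (hC t) (hC' t)
  refine ⟨2 * (C + C'), ?_, fun t => ?_⟩
  · simpa using (norm_nonneg _).trans (hfst 1)
  calc normState (γ t - γ' t) ≤ 2 * ‖(γ t - γ' t).1‖ :=
        normState_le_two_mul_norm_fst (by simp [hψ, hψ'])
    _ ≤ 2 * (C + C') * t ^ 2 := by rw [mul_assoc]; gcongr; exact hfst t

end FollowsToSecondOrder

theorem three_arc_second_order_general (x₀ : Fin 2 → ℝ) (ψ₀ : ℝ)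
    (p₁ p₂ p₃ : (Fin 2 → ℝ) × ℝ) (l₁ l₂ l₃ : ℝ) :
    ∃ C : ℝ, 0 ≤ C ∧ ∀ t ∈ Set.Icc (0:ℝ) 1,
      normState
        (trajFrom (trajFrom (trajFrom (x₀, ψ₀) p₁ (l₁ * t)) p₂ (l₂ * t)) p₃ (l₃ * t)
          - trajFrom (x₀, ψ₀) (l₁ • p₁ + l₂ • p₂ + l₃ • p₃) t)
        ≤ C * t ^ 2 := by
  have hE := (((FollowsToSecondOrder.const (x₀, ψ₀)).trajFrom p₁ l₁).trajFrom p₂ l₂).trajFrom p₃ l₃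
  have hA := (FollowsToSecondOrder.const (x₀, ψ₀)).trajFrom (l₁ • p₁ + l₂ • p₂ + l₃ • p₃) 1
  simp only [zero_add, one_smul, one_mul] at hE hA
  obtain ⟨C, hC, hbound⟩ := hE.exists_normState_sub_le hA
  exact ⟨C, hC, fun t _ => hbound t⟩

/-- Second-order accuracy of the three-arc decomposition: following `p₁, p₂, p₃` for the
respective durations `λ₁ t, λ₂ t, λ₃ t` from `(x₀, ψ₀)` differs from following the single
averaged velocity `p̄ = λ₁ p₁ + λ₂ p₂ + λ₃ p₃` for duration `t` by at most `C t²` on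
`t ∈ [0, 1]`, for some constant `C ≥ 0`. -/
theorem three_arc_second_order (x₀ : Fin 2 → ℝ) (ψ₀ : ℝ)
    (p₁ p₂ p₃ : (Fin 2 → ℝ) × ℝ) (l₁ l₂ l₃ : ℝ)
    (h₁ : 0 ≤ l₁) (h₂ : 0 ≤ l₂) (h₃ : 0 ≤ l₃) :
    ∃ C : ℝ, 0 ≤ C ∧ ∀ t ∈ Set.Icc (0:ℝ) 1,
      normState
        (trajFrom (trajFrom (trajFrom (x₀, ψ₀) p₁ (l₁ * t)) p₂ (l₂ * t)) p₃ (l₃ * t)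
          - trajFrom (x₀, ψ₀) (l₁ • p₁ + l₂ • p₂ + l₃ • p₃) t)
        ≤ C * t ^ 2 :=
  three_arc_second_order_general x₀ ψ₀ p₁ p₂ p₃ l₁ l₂ l₃
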